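/- arXiv:2208.07040 — 7 statements merged into one kernel-verified Lean document; each statement's English description precedes it below -/
import Mathlib

section
/- There exists a set V ⊆ ℝ that is simultaneously a Vitali selector (V contains exactly one element from each coset of ℚ in ℝ) and a Bernstein set (both V and its complement intersect every nonempty perfect subset of ℝ). -/
open Cardinal Set

noncomputable section

namespace VB

/-- The rationals as an additive subgroup of ℝ. -/
def Q : AddSubgroup ℝ := AddMonoidHom.range ((Rat.castHom ℝ).toAddMonoidHom)

lemma mem_Q (x : ℝ) : x ∈ Q ↔ x ∈ Set.range ((↑) : ℚ → ℝ) := by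
  simp [Q, AddMonoidHom.mem_range, Set.mem_range, eq_comm]

abbrev Qt := ℝ ⧸ Q

def π : ℝ → Qt := QuotientAddGroup.mk

lemma π_eq {x y : ℝ} : π x = π y ↔ x - y ∈ Q :=
  QuotientAddGroup.eq_iff_sub_mem

lemma π_surj : Function.Surjective π := QuotientAddGroup.mk_surjective

lemma fiber_countable (c : Qt) : {x : ℝ | π x = c}.Countable := by
  obtain ⟨x₀, rfl⟩ := π_surj c
  have : {x : ℝ | π x = π x₀} ⊆ Set.range (fun q : ℚ => x₀ + (q : ℝ)) := by
    intro x hx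
    obtain ⟨q, hq⟩ := (mem_Q _).mp (π_eq.mp hx)
    exact ⟨q, by dsimp; linarith [hq]⟩
  exact (Set.countable_range _).mono this

lemma perfect_card {P : Set ℝ} (hP : Perfect P) (hne : P.Nonempty) : 𝔠 ≤ #P := by
  obtain ⟨g, hgr, -, hginj⟩ := hP.exists_nat_bool_injection hne
  have : #(ℕ → Bool) ≤ #P := by
    refine mk_le_of_injective (f := fun x => (⟨g x, hgr ⟨x, rfl⟩⟩ : P)) ?_
    intro a b hab
    exact hginj (Subtype.ext_iff.mp hab)
  refine le_trans (le_of_eq ?_) this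
  rw [← Cardinal.two_power_aleph0]
  simp [Cardinal.mk_arrow]

lemma image_card {P : Set ℝ} (h : 𝔠 ≤ #P) : 𝔠 ≤ #(π '' P) := by
  by_contra hlt
  push_neg at hlt
  have hsub : P ⊆ ⋃ c : π '' P, {x : ℝ | π x = c.1} := by
    intro x hx
    exact Set.mem_iUnion.mpr ⟨⟨π x, ⟨x, hx, rfl⟩⟩, rfl⟩
  have hPne : P.Nonempty := by
    rw [Set.nonempty_iff_ne_empty]
    rintro rfl
    rw [Cardinal.mk_emptyCollection] at h
    exact absurd h (by simp [Cardinal.continuum_ne_zero, pos_iff_ne_zero])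
  have : Nonempty ↑(π '' P) := (hPne.image π).to_subtype
  have h1 : #P ≤ #(π '' P) * ℵ₀ := by
    refine le_trans (mk_le_mk_of_subset hsub) ?_
    refine le_trans (mk_iUnion_le _) ?_
    refine mul_le_mul_right ?_ _
    exact ciSup_le fun c => (fiber_countable c.1).le_aleph0
  have h2 : #(π '' P) * ℵ₀ < 𝔠 :=
    Cardinal.mul_lt_of_lt aleph0_le_continuum hlt aleph0_lt_continuum
  exact absurd (h.trans h1) (not_le.mpr h2)

/-- The type of nonempty perfect subsets of ℝ. -/
def PS := {P : Set ℝ // Perfect P ∧ P.Nonempty}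

instance : PerfectSpace ℝ :=
  perfectSpace_iff_forall_not_isolated.mpr fun _ => inferInstance

instance : Nonempty PS := ⟨⟨Set.univ, PerfectSpace.univ_perfect ℝ, ⟨0, trivial⟩⟩⟩

lemma card_PS : #PS ≤ 𝔠 := by
  have hinj : Function.Injective (fun P : PS => fun q : ℚ => Metric.infDist (q : ℝ) P.1) := by
    intro P₁ P₂ h
    have hcont₁ : Continuous (fun x : ℝ => Metric.infDist x P₁.1) := Metric.continuous_infDist_pt _
    have hcont₂ : Continuous (fun x : ℝ => Metric.infDist x P₂.1) := Metric.continuous_infDist_pt _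
    have heq : (fun x : ℝ => Metric.infDist x P₁.1) = fun x : ℝ => Metric.infDist x P₂.1 := by
      refine Continuous.ext_on Rat.denseRange_cast hcont₁ hcont₂ ?_
      rintro x ⟨q, rfl⟩
      exact congrFun h q
    refine Subtype.ext (Set.ext fun x => ?_)
    rw [P₁.2.1.closed.mem_iff_infDist_zero P₁.2.2, P₂.2.1.closed.mem_iff_infDist_zero P₂.2.2,
      congrFun heq x]
  refine le_trans (mk_le_of_injective hinj) (le_of_eq ?_)
  rw [Cardinal.mk_arrow]
  simp [Cardinal.mk_real, Cardinal.continuum_power_aleph0]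

/-- Index type: a well-order of type `𝔠.ord`. -/
abbrev I := (𝔠 : Cardinal).ord.ToType

lemma card_I : #I = 𝔠 := Cardinal.mk_ord_toType 𝔠

def emb : PS ↪ I := Classical.choice
  (Cardinal.le_def PS I |>.mp (card_PS.trans_eq card_I.symm))

def e : I → PS := Function.invFun emb

lemma e_surj : Function.Surjective e :=
  Function.invFun_surjective emb.injective

def Good (i : I) (g : ∀ j : I, j < i → ℝ × ℝ) (pq : ℝ × ℝ) : Prop :=
  pq.1 ∈ (e i).1 ∧ pq.2 ∈ (e i).1 ∧ π pq.1 ≠ π pq.2 ∧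
    ∀ j (h : j < i), π pq.1 ≠ π (g j h).1 ∧ π pq.1 ≠ π (g j h).2 ∧
      π pq.2 ≠ π (g j h).1 ∧ π pq.2 ≠ π (g j h).2

lemma exists_good (i : I) (g : ∀ j : I, j < i → ℝ × ℝ) : ∃ pq, Good i g pq := by
  set U : Set Qt := Set.range (fun j : {j : I // j < i} => π (g j.1 j.2).1) ∪
    Set.range (fun j : {j : I // j < i} => π (g j.1 j.2).2) with hU
  have hIio : #{j : I // j < i} < 𝔠 := Cardinal.mk_Iio_ord_toType i
  have hUcard : #U < 𝔠 := by
    refine lt_of_le_of_lt (mk_union_le _ _) ?_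
    exact Cardinal.add_lt_of_lt aleph0_le_continuum
      (lt_of_le_of_lt (mk_range_le) hIio) (lt_of_le_of_lt (mk_range_le) hIio)
  set T : Set Qt := π '' (e i).1 with hT
  have hTcard : 𝔠 ≤ #T := image_card (perfect_card (e i).2.1 (e i).2.2)
  have hnt : (T \ U).Nontrivial := by
    by_contra hns
    rw [Set.not_nontrivial_iff] at hns
    have h1 : #(T \ U : Set Qt) ≤ 1 := Cardinal.mk_le_one_iff_set_subsingleton.mpr hns
    have h2 : #T ≤ #(T \ U : Set Qt) + #U :=
      le_trans (mk_le_mk_of_subset (by intro x hx; by_cases h : x ∈ U <;> simp [hx, h]))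
        (mk_union_le _ _)
    have : #T < 𝔠 := lt_of_le_of_lt h2
      (Cardinal.add_lt_of_lt aleph0_le_continuum
        (lt_of_le_of_lt h1 (lt_of_lt_of_le one_lt_aleph0 aleph0_le_continuum)) hUcard)
    exact absurd hTcard (not_le.mpr this)
  obtain ⟨c₁, hc₁, c₂, hc₂, hcc⟩ := hnt
  obtain ⟨p, hp, hpc⟩ := hc₁.1
  obtain ⟨q, hq, hqc⟩ := hc₂.1
  refine ⟨(p, q), hp, hq, by rw [hpc, hqc]; exact hcc, ?_⟩
  intro j hj
  have hpU : π p ∉ U := by rw [hpc]; exact hc₁.2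
  have hqU : π q ∉ U := by rw [hqc]; exact hc₂.2
  refine ⟨?_, ?_, ?_, ?_⟩
  · intro h; exact hpU (Or.inl ⟨⟨j, hj⟩, h.symm⟩)
  · intro h; exact hpU (Or.inr ⟨⟨j, hj⟩, h.symm⟩)
  · intro h; exact hqU (Or.inl ⟨⟨j, hj⟩, h.symm⟩)
  · intro h; exact hqU (Or.inr ⟨⟨j, hj⟩, h.symm⟩)

def f : I → ℝ × ℝ :=
  (IsWellFounded.wf (r := ((· < ·) : I → I → Prop))).fix
    (fun i g => Classical.choose (exists_good i g))

lemma f_good (i : I) : Good i (fun j _ => f j) (f i) := by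
  have hfix := (IsWellFounded.wf (r := ((· < ·) : I → I → Prop))).fix_eq
    (fun i g => Classical.choose (exists_good i g)) i
  have := Classical.choose_spec (exists_good i (fun j (_ : j < i) => f j))
  rw [f, hfix]
  exact this

lemma pp_inj {i j : I} (h : π (f i).1 = π (f j).1) : i = j := by
  rcases lt_trichotomy i j with hij | hij | hij
  · exact absurd h.symm ((f_good j).2.2.2 i hij).1
  · exact hij
  · exact absurd h ((f_good i).2.2.2 j hij).1

lemma qq_inj {i j : I} (h : π (f i).2 = π (f j).2) : i = j := by
  rcases lt_trichotomy i j with hij | hij | hij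
  · exact absurd h.symm ((f_good j).2.2.2 i hij).2.2.2
  · exact hij
  · exact absurd h ((f_good i).2.2.2 j hij).2.2.2

lemma pq_ne (i j : I) : π (f i).1 ≠ π (f j).2 := by
  rcases lt_trichotomy i j with hij | hij | hij
  · exact fun h => ((f_good j).2.2.2 i hij).2.2.1 h.symm
  · subst hij; exact (f_good i).2.2.1
  · exact ((f_good i).2.2.2 j hij).2.1

lemma exists_rep_notq (c : Qt) : ∃ x : ℝ, π x = c ∧ ∀ i, x ≠ (f i).2 := by
  by_contra h
  push_neg at h
  obtain ⟨x₀, hx₀⟩ := π_surj c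
  have hx₁ : π (x₀ + 1) = c := by
    rw [← hx₀]; refine π_eq.mpr ?_
    refine (mem_Q _).mpr ⟨1, by norm_num⟩
  obtain ⟨i, hi⟩ := h x₀ hx₀
  obtain ⟨j, hj⟩ := h (x₀ + 1) hx₁
  have : i = j := qq_inj (by rw [← hi, ← hj, hx₀, hx₁])
  rw [this, ← hj] at hi
  linarith

open Classical in
def rep (c : Qt) : ℝ :=
  if h : ∃ i, π (f i).1 = c then (f (Classical.choose h)).1
  else Classical.choose (exists_rep_notq c)

lemma rep_pi (c : Qt) : π (rep c) = c := by
  rw [rep]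
  classical
  split_ifs with h
  · exact Classical.choose_spec h
  · exact (Classical.choose_spec (exists_rep_notq c)).1

lemma rep_ne_q (c : Qt) (i : I) : rep c ≠ (f i).2 := by
  rw [rep]
  classical
  split_ifs with h
  · intro heq; exact pq_ne (Classical.choose h) i (by rw [heq])
  · exact (Classical.choose_spec (exists_rep_notq c)).2 i

lemma rep_p (i : I) : rep (π (f i).1) = (f i).1 := by
  have h : ∃ j, π (f j).1 = π (f i).1 := ⟨i, rfl⟩
  rw [rep, dif_pos h]
  have := Classical.choose_spec h
  rw [pp_inj this]

def V : Set ℝ := {x | rep (π x) = x}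

lemma rep_mem_V (c : Qt) : rep c ∈ V := by
  show rep (π (rep c)) = rep c
  rw [rep_pi]

end VB

end

theorem stmt3 :
    ∃ V : Set ℝ,
      (∀ x : ℝ, ∃! v, v ∈ V ∧ x - v ∈ Set.range ((↑) : ℚ → ℝ)) ∧
      (∀ P : Set ℝ, Perfect P → P.Nonempty → (P ∩ V).Nonempty ∧ (P ∩ Vᶜ).Nonempty) := by
  refine ⟨VB.V, fun x => ?_, fun P hP hne => ?_⟩
  · refine ⟨VB.rep (VB.π x), ⟨VB.rep_mem_V _, ?_⟩, ?_⟩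
    · exact (VB.mem_Q _).mp (VB.π_eq.mp (VB.rep_pi (VB.π x)).symm)
    · rintro v ⟨hv, hxv⟩
      have : VB.π x = VB.π v := VB.π_eq.mpr ((VB.mem_Q _).mpr hxv)
      have hv' : VB.rep (VB.π v) = v := hv
      rw [← this] at hv'
      exact hv'.symm
  · obtain ⟨i, hi⟩ := VB.e_surj ⟨P, hP, hne⟩
    have hg := VB.f_good i
    have hp : (VB.f i).1 ∈ P := by have := hg.1; rwa [hi] at this
    have hq : (VB.f i).2 ∈ P := by have := hg.2.1; rwa [hi] at this
    refine ⟨⟨(VB.f i).1, hp, ?_⟩, ⟨(VB.f i).2, hq, ?_⟩⟩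
    · exact VB.rep_p i
    · intro hmem
      exact VB.rep_ne_q (VB.π (VB.f i).2) i hmem
end

section
/- If V ⊆ ℝ is a Bernstein set and E ⊆ ℝ is a Lebesgue measurable set of positive measure, then there exists a rational r such that (V + r) ∩ E is not Lebesgue null; moreover E \ ((V + r) ∩ E) contains no closed set of positive measure. -/
/-!
A Bernstein set meets every closed set of positive measure, because such a set is a countable
(hence null) set plus a nonempty perfect set. Consequently it has full outer measure inside every
measurable set `E`: if `V ∩ E` were null, `E` minus a measurable null hull of `V ∩ E` would still
contain a closed set of positive measure, disjoint from `V`. So already `r = 0` works.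
-/

open MeasureTheory Set

variable {X : Type*} [TopologicalSpace X] [MeasurableSpace X] {μ : Measure X}

theorem IsClosed.exists_perfect_nonempty_subset_of_measure_ne_zero [SecondCountableTopology X]
    [NullSingletonClass μ] {C : Set X} (hC : IsClosed C) (hμC : μ C ≠ 0) :
    ∃ P, Perfect P ∧ P.Nonempty ∧ P ⊆ C := by
  obtain ⟨W, P, hW, hP, rfl⟩ := exists_countable_union_perfect_of_isClosed hC
  refine ⟨P, hP, nonempty_iff_ne_empty.2 fun hPe => hμC ?_, subset_union_right⟩
  rw [hPe, union_empty, hW.measure_zero]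

theorem IsClosed.inter_nonempty_of_forall_perfect [SecondCountableTopology X]
    [NullSingletonClass μ] {V C : Set X} (hV : ∀ P, Perfect P → P.Nonempty → (P ∩ V).Nonempty)
    (hC : IsClosed C) (hμC : μ C ≠ 0) : (C ∩ V).Nonempty := by
  obtain ⟨P, hP, hPne, hPC⟩ := hC.exists_perfect_nonempty_subset_of_measure_ne_zero hμC
  exact (hV P hP hPne).mono (inter_subset_inter_left V hPC)

theorem measure_inter_ne_zero_of_forall_isClosed [T2Space X] [μ.InnerRegular] {V E : Set X}
    (hV : ∀ C, IsClosed C → μ C ≠ 0 → (C ∩ V).Nonempty) (hE : MeasurableSet E)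
    (hμE : μ E ≠ 0) : μ (V ∩ E) ≠ 0 := by
  intro hnull
  set N := toMeasurable μ (V ∩ E)
  have hμEN : 0 < μ (E \ N) := by
    rw [measure_sdiff_null ((measure_toMeasurable _).trans hnull)]
    exact pos_iff_ne_zero.2 hμE
  obtain ⟨K, hKEN, hK, hμK⟩ :=
    (hE.diff (measurableSet_toMeasurable μ _)).exists_lt_isCompact hμEN
  obtain ⟨x, hxK, hxV⟩ := hV K hK.isClosed hμK.ne'
  exact (hKEN hxK).2 (subset_toMeasurable μ _ ⟨hxV, (hKEN hxK).1⟩)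

theorem stmt5 (V : Set ℝ)
    (hV : ∀ P : Set ℝ, Perfect P → P.Nonempty → (P ∩ V).Nonempty ∧ (P ∩ Vᶜ).Nonempty)
    (E : Set ℝ) (hE : MeasurableSet E) (hpos : 0 < volume E) :
    ∃ r : ℚ, volume (((fun x => x + (r : ℝ)) '' V) ∩ E) ≠ 0 ∧
      ∀ C : Set ℝ, IsClosed C → C ⊆ E \ (((fun x => x + (r : ℝ)) '' V) ∩ E) →
        volume C = 0 := by
  have hV_closed : ∀ C : Set ℝ, IsClosed C → volume C ≠ 0 → (C ∩ V).Nonempty :=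
    fun C hC hμC => hC.inter_nonempty_of_forall_perfect (fun P hP hPne => (hV P hP hPne).1) hμC
  refine ⟨0, ?_, fun C hC hCE => ?_⟩
  · simpa using measure_inter_ne_zero_of_forall_isClosed hV_closed hE hpos.ne'
  · by_contra hμC
    obtain ⟨x, hxC, hxV⟩ := hV_closed C hC hμC
    exact (hCE hxC).2 ⟨by simpa using hxV, (hCE hxC).1⟩
end

section
/- For every Lebesgue measurable set E ⊆ ℝ of positive measure, there exists an ARD set F ⊆ E such that E \ F contains no measurable set of positive measure (equivalently, F is full in E). -/
/-
The measurable subsets of `E` of positive measure number at most `𝔠`, and each, being an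
uncountable Borel set, has cardinality `𝔠`. Well-order them in type the initial ordinal of their
cardinality and pick in each `M` a point `x M` at irrational distance from all earlier points: each
earlier point forbids only countably many values, so fewer than `𝔠` values are forbidden in all.
Then `F = range x` meets every such `M`.
-/

open MeasureTheory

def ARD (B : Set ℝ) : Prop := ∀ x ∈ B, ∀ y ∈ B, x ≠ y → Irrational |x - y|

open Cardinal Set Pointwise

theorem Real.mk_measurableSet_le_continuum : #{s : Set ℝ | MeasurableSet s} ≤ 𝔠 := by
  rw [BorelSpace.measurable_eq (α := ℝ), Real.borel_eq_generateFrom_Iio_rat]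
  refine MeasurableSpace.cardinal_measurableSet_le_continuum ?_
  exact (mk_iUnion_le _).trans (by simp [aleph0_le_continuum])

theorem MeasurableSet.mk_eq_continuum_of_not_countable {α : Type*} [MeasurableSpace α]
    [StandardBorelSpace α] {s : Set α} (hs : MeasurableSet s) (h : ¬s.Countable) : #s = 𝔠 := by
  have := hs.standardBorel
  simpa using lift_mk_eq'.2 ⟨(PolishSpace.measurableEquivNatBoolOfNotCountable (α := s)
    (by rwa [countable_coe_iff])).toEquiv⟩

theorem exists_mem_forall_irrational_sub {S T : Set ℝ} (hT : #T < 𝔠) (hS : 𝔠 ≤ #S) :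
    ∃ z ∈ S, ∀ t ∈ T, Irrational (z - t) := by
  have hbad : #(T + range ((↑) : ℚ → ℝ) : Set ℝ) < 𝔠 :=
    mk_add_le.trans_lt <| mul_lt_of_lt aleph0_le_continuum hT <|
      (mk_range_le.trans mk_le_aleph0).trans_lt aleph0_lt_continuum
  obtain ⟨z, hzS, hz⟩ := not_subset.1 fun h => (hbad.trans_le hS).not_ge (mk_le_mk_of_subset h)
  refine ⟨z, hzS, fun t ht ⟨q, hq⟩ => hz ⟨t, ht, q, ⟨q, rfl⟩, ?_⟩⟩
  rw [hq]; ring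

theorem exists_pairwise_irrational_sub {ι : Type} (S : ι → Set ℝ) (hι : #ι ≤ 𝔠)
    (hS : ∀ i, 𝔠 ≤ #(S i)) :
    ∃ x : ι → ℝ, (∀ i, x i ∈ S i) ∧ Pairwise fun i j => Irrational (x i - x j) := by
  obtain ⟨_, _, hord⟩ := exists_ord_eq_type_lt ι
  have step (i : ι) (g : ∀ j < i, ℝ) : ∃ z ∈ S i, ∀ j (h : j < i), Irrational (z - g j h) := by
    have hlt : #(range fun j : Iio i => g j j.2) < 𝔠 :=
      mk_range_le.trans_lt <| (mk_Iio_lt i hord).trans_le hι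
    obtain ⟨z, hzS, hz⟩ := exists_mem_forall_irrational_sub hlt (hS i)
    exact ⟨z, hzS, fun j h => hz _ ⟨⟨j, h⟩, rfl⟩⟩
  let x : ι → ℝ := wellFounded_lt.fix fun i g => (step i g).choose
  have hx (i : ι) : x i ∈ S i ∧ ∀ j < i, Irrational (x i - x j) := by
    rw [show x i = (step i fun j _ => x j).choose from wellFounded_lt.fix_eq _ i]
    exact (step i _).choose_spec
  refine ⟨x, fun i => (hx i).1, fun i j hij => ?_⟩
  rcases hij.lt_or_gt with h | h
  · simpa using ((hx j).2 i h).neg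
  · exact (hx i).2 j h

theorem ARD.range_of_pairwise_irrational_sub {ι : Type*} {x : ι → ℝ}
    (hx : Pairwise fun i j => Irrational (x i - x j)) : ARD (range x) := by
  rintro _ ⟨i, rfl⟩ _ ⟨j, rfl⟩ hne
  have hij : Irrational (x i - x j) := hx fun h => hne (congrArg x h)
  rcases abs_choice (x i - x j) with h | h <;> rw [h]
  exacts [hij, hij.neg]

theorem stmt6_general (E : Set ℝ) :
    ∃ F ⊆ E, ARD F ∧ ∀ M : Set ℝ, MeasurableSet M → M ⊆ E \ F → volume M = 0 := by
  let ι := {M : Set ℝ // MeasurableSet M ∧ M ⊆ E ∧ volume M ≠ 0}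
  have hι : #ι ≤ 𝔠 := (mk_subtype_mono fun _ h => h.1).trans Real.mk_measurableSet_le_continuum
  have hcard (M : ι) : 𝔠 ≤ #M.1 :=
    (M.2.1.mk_eq_continuum_of_not_countable fun hc => M.2.2.2 (hc.measure_zero _)).ge
  obtain ⟨x, hxM, hx⟩ := exists_pairwise_irrational_sub (fun M : ι => M.1) hι hcard
  refine ⟨range x, range_subset_iff.2 fun M => M.2.2.1 (hxM M),
    ARD.range_of_pairwise_irrational_sub hx, fun M hM hME => ?_⟩
  by_contra h0
  exact (hME (hxM ⟨M, hM, hME.trans sdiff_subset, h0⟩)).2 (mem_range_self _)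

theorem stmt6 (E : Set ℝ) (hE : MeasurableSet E) (hpos : 0 < volume E) :
    ∃ F ⊆ E, ARD F ∧ ∀ M : Set ℝ, MeasurableSet M → M ⊆ E \ F → volume M = 0 :=
  stmt6_general E
end

section
/- Let E ⊆ ℝ be a set such that for some nonempty perfect set Q, every nonempty perfect subset of Q meets E in a set of cardinality continuum. Then there exists an ARD set F ⊆ E meeting every perfect set P with |P ∩ E| = 𝔠 (where 𝔠 is the continuum). -/
/-!
Well-order the family of closed sets `P` with `|P ∩ E| = 𝔠` by its initial ordinal; as there
are at most `𝔠` closed subsets of `ℝ`, every initial segment has fewer than `𝔠` members. By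
transfinite recursion pick `f P ∈ P ∩ E` outside the `ℚ`-translates of the earlier choices: these
cover fewer than `𝔠` points, while `P ∩ E` has `𝔠`. Then `F = range f` has pairwise irrational
differences.
-/

open Cardinal Set Pointwise

theorem Cardinal.mk_closeds_le_continuum (X : Type*) [TopologicalSpace X]
    [SecondCountableTopology X] : #(TopologicalSpace.Closeds X) ≤ 𝔠 := by
  let B := TopologicalSpace.countableBasis X
  have hinj : Function.Injective fun C : TopologicalSpace.Closeds X =>
      {b : B | (b : Set X) ⊆ (C : Set X)ᶜ} := by
    intro C D hCD
    have hB := TopologicalSpace.isBasis_countableBasis X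
    rw [← SetLike.coe_set_eq, ← compl_inj_iff, hB.open_eq_sUnion' C.isClosed.isOpen_compl,
      hB.open_eq_sUnion' D.isClosed.isOpen_compl]
    simp only [Set.ext_iff, Subtype.forall] at hCD
    congr 1
    ext s
    exact and_congr_right (hCD s)
  calc #(TopologicalSpace.Closeds X) ≤ #(Set B) := mk_le_of_injective hinj
    _ = 2 ^ #B := mk_set
    _ ≤ 2 ^ ℵ₀ :=
      power_le_power_left two_ne_zero (TopologicalSpace.countable_countableBasis X).le_aleph0
    _ = 𝔠 := two_power_aleph0

section Transversal

universe u

variable {G : Type u} [AddGroup G] {H : AddSubgroup G} {κ : Cardinal.{u}}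

theorem exists_mem_forall_sub_notMem (hκ : ℵ₀ ≤ κ) (hH : #H < κ) {A S : Set G}
    (hA : κ ≤ #A) (hS : #S < κ) : ∃ x ∈ A, ∀ y ∈ S, x - y ∉ H := by
  have hlt : #↥((H : Set G) + S) < #A :=
    (mk_add_le.trans_lt (mul_lt_of_lt hκ hH hS)).trans_le hA
  obtain ⟨x, hxA, hx⟩ := not_subset.1 fun hsub => (Cardinal.mk_le_mk_of_subset hsub).not_gt hlt
  exact ⟨x, hxA, fun y hy hxy => hx ⟨x - y, hxy, y, hy, sub_add_cancel x y⟩⟩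

theorem exists_forall_mem_pairwise_sub_notMem (hκ : ℵ₀ ≤ κ) (hH : #H < κ) {ι : Type u}
    (hι : #ι ≤ κ) (A : ι → Set G) (hA : ∀ i, κ ≤ #(A i)) :
    ∃ f : ι → G, (∀ i, f i ∈ A i) ∧ Pairwise fun i j => f i - f j ∉ H := by
  obtain ⟨r, _, hr⟩ := exists_ord_eq ι
  have hseg (i : ι) : #{j // r j i} < κ := by
    simpa only [Ordinal.card_typein] using (card_typein_lt i hr).trans_le hι
  have step (i : ι) (g : ∀ j, r j i → G) :=
    exists_mem_forall_sub_notMem hκ hH (hA i) (mk_range_le.trans_lt (hseg i))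
      (S := range fun j : {j // r j i} => g j j.2)
  let f : ι → G := IsWellFounded.fix r fun i g => (step i g).choose
  have hf (i : ι) : f i ∈ A i ∧ ∀ j, r j i → f i - f j ∉ H := by
    have hfix : f i = (step i fun j _ => f j).choose := IsWellFounded.fix_eq r _ i
    obtain ⟨hmem, hsub⟩ := (step i fun j _ => f j).choose_spec
    rw [← hfix] at hmem hsub
    exact ⟨hmem, fun j hj => hsub (f j) ⟨⟨j, hj⟩, rfl⟩⟩
  refine ⟨f, fun i => (hf i).1, fun i j hij => ?_⟩
  rcases trichotomous_of r i j with hr | rfl | hr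
  · rw [← neg_sub, neg_mem_iff]
    exact (hf j).2 i hr
  · exact absurd rfl hij
  · exact (hf i).2 j hr

end Transversal

theorem ard_range_of_pairwise_irrational_sub {ι : Type*} {f : ι → ℝ}
    (hf : Pairwise fun i j => Irrational (f i - f j)) : ARD (range f) := by
  rintro _ ⟨i, rfl⟩ _ ⟨j, rfl⟩ hne
  have hij : Irrational (f i - f j) := hf fun h => hne (congrArg f h)
  rcases abs_choice (f i - f j) with h | h <;> rw [h]
  · exact hij
  · exact hij.neg

theorem mk_ratCast_range_lt_continuum : #(Rat.castHom ℝ : ℚ →+ ℝ).range < 𝔠 :=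
  ((mk_le_of_surjective (AddMonoidHom.rangeRestrict_surjective _)).trans mkRat.le).trans_lt
    aleph0_lt_continuum

theorem stmt8_general (E : Set ℝ) :
    ∃ F ⊆ E, ARD F ∧
      ∀ P : Set ℝ, Perfect P → P.Nonempty →
        Cardinal.mk ↥(P ∩ E) = Cardinal.continuum → (F ∩ P).Nonempty := by
  let ι := {P : TopologicalSpace.Closeds ℝ // #↥((P : Set ℝ) ∩ E) = 𝔠}
  obtain ⟨f, hfmem, hfirr⟩ := exists_forall_mem_pairwise_sub_notMem aleph0_le_continuum
    mk_ratCast_range_lt_continuum ((mk_subtype_le _).trans (mk_closeds_le_continuum ℝ))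
    (fun P : ι => (P : Set ℝ) ∩ E) fun P => P.2.ge
  -- `Irrational x` is by definition `x ∉ range ((↑) : ℚ → ℝ)`, which is what `hfirr` says
  refine ⟨range f, range_subset_iff.2 fun P => (hfmem P).2,
    ard_range_of_pairwise_irrational_sub hfirr, fun P hP _ hPE => ?_⟩
  let i : ι := ⟨⟨P, hP.closed⟩, hPE⟩
  exact ⟨f i, mem_range_self i, (hfmem i).1⟩

theorem stmt8 (E : Set ℝ) (Q : Set ℝ) (hQ : Perfect Q) (hQne : Q.Nonempty)
    (h : ∀ P : Set ℝ, Perfect P → P.Nonempty → P ⊆ Q →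
      Cardinal.mk ↥(P ∩ E) = Cardinal.continuum) :
    ∃ F ⊆ E, ARD F ∧
      ∀ P : Set ℝ, Perfect P → P.Nonempty →
        Cardinal.mk ↥(P ∩ E) = Cardinal.continuum → (F ∩ P).Nonempty :=
  stmt8_general E
end

section
/- There exists a set F ⊆ ℝ, constructed by transfinite recursion of length continuum, such that F meets every nonempty perfect subset of ℝ and F is an ARD set (all pairwise distances irrational); equivalently, there exists an ARD Bernstein-type set meeting every perfect set. -/
open Cardinal Set Topology Filter

/-- A nonempty perfect subset of ℝ has cardinality at least continuum. -/
lemma perfect_card_ge {P : Set ℝ} (hP : Perfect P) (hne : P.Nonempty) :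
    𝔠 ≤ #P := by
  obtain ⟨f, hrange, -, hinj⟩ := hP.exists_nat_bool_injection hne
  have : #(ℕ → Bool) ≤ #P := by
    refine mk_le_of_injective (f := fun x => (⟨f x, hrange ⟨x, rfl⟩⟩ : P)) ?_
    intro a b hab
    exact hinj (congrArg Subtype.val hab)
  simpa [mk_arrow, two_power_aleph0] using this

/-- The collection of nonempty perfect subsets of ℝ has cardinality at most continuum. -/
lemma card_perfects_le :
    #{P : Set ℝ // Perfect P ∧ P.Nonempty} ≤ 𝔠 := by
  have h : Function.Injective
      (fun P : {P : Set ℝ // Perfect P ∧ P.Nonempty} =>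
        (fun q : ℚ => Metric.infDist (q : ℝ) P.1)) := by
    intro P Q h
    have hcont : ∀ x : ℝ, Metric.infDist x P.1 = Metric.infDist x Q.1 := by
      have : Set.EqOn (fun x : ℝ => Metric.infDist x P.1)
          (fun x : ℝ => Metric.infDist x Q.1) (Set.range ((↑) : ℚ → ℝ)) := by
        rintro x ⟨q, rfl⟩
        exact congrFun h q
      have := (Metric.continuous_infDist_pt P.1).ext_on
        Rat.denseRange_cast (Metric.continuous_infDist_pt Q.1) this
      exact fun x => congrFun this x
    ext x
    rw [P.2.1.closed.mem_iff_infDist_zero P.2.2, Q.2.1.closed.mem_iff_infDist_zero Q.2.2,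
      hcont x]
  calc #{P : Set ℝ // Perfect P ∧ P.Nonempty} ≤ #(ℚ → ℝ) := mk_le_of_injective h
    _ = 𝔠 := by simp [mk_arrow, mk_real, continuum_power_aleph0]

lemma perfect_univ_real : Perfect (Set.univ : Set ℝ) := by
  constructor
  · exact isClosed_univ
  · intro x _
    rw [accPt_iff_nhds]
    intro U hU
    have hmem : U ∩ {x}ᶜ ∈ 𝓝[≠] x :=
      Filter.inter_mem (nhdsWithin_le_nhds hU) self_mem_nhdsWithin
    obtain ⟨y, hyU, hyx⟩ := Filter.nonempty_of_mem hmem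
    exact ⟨y, ⟨hyU, trivial⟩, hyx⟩

theorem stmt10 :
    ∃ F : Set ℝ, ARD F ∧ ∀ P : Set ℝ, Perfect P → P.Nonempty → (F ∩ P).Nonempty := by
  classical
  set S := {P : Set ℝ // Perfect P ∧ P.Nonempty} with hS
  have hSne : Nonempty S := ⟨⟨Set.univ, perfect_univ_real, ⟨0, trivial⟩⟩⟩
  set ι := (𝔠 : Cardinal).ord.ToType with hι
  -- a surjection from ι onto S
  have hmkι : #ι = 𝔠 := by rw [hι, Cardinal.mk_toType, Cardinal.card_ord]
  have hle : #S ≤ #ι := hmkι ▸ card_perfects_le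
  obtain ⟨emb⟩ := Cardinal.le_def _ _ |>.mp hle
  have hsurj : Function.Surjective (Function.invFun emb) :=
    Function.invFun_surjective emb.injective
  obtain ⟨p, hsurj2⟩ : ∃ p : ι → S, Function.Surjective p :=
    ⟨Function.invFun emb, hsurj⟩
  -- key existence lemma at each stage
  have key : ∀ (i : ι) (g : ∀ j : ι, j < i → ℝ),
      ∃ x, x ∈ (p i).1 ∧ ∀ (j : ι) (h : j < i), Irrational (x - g j h) := by
    intro i g
    set Bad : Set ℝ := Set.range (fun pr : {j : ι // j < i} × ℚ => g pr.1.1 pr.1.2 + pr.2)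
      with hBad
    have hBadcard : #Bad < 𝔠 := by
      refine lt_of_le_of_lt (mk_range_le) ?_
      rw [mk_prod]
      simp only [Cardinal.lift_id]
      refine Cardinal.mul_lt_of_lt aleph0_le_continuum ?_ ?_
      · exact Cardinal.mk_Iio_ord_toType i
      · rw [Cardinal.mkRat]; exact aleph0_lt_continuum
    have : ¬ (p i).1 ⊆ Bad := by
      intro hsub
      exact absurd (le_trans (perfect_card_ge (p i).2.1 (p i).2.2)
        (Cardinal.mk_le_mk_of_subset hsub)) (not_le.mpr hBadcard)
    obtain ⟨x, hxP, hxB⟩ := Set.not_subset.mp this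
    refine ⟨x, hxP, fun j h => ?_⟩
    rintro ⟨q, hq⟩
    refine hxB ⟨⟨⟨j, h⟩, q⟩, ?_⟩
    show g j h + (q : ℝ) = x
    rw [hq]; ring
  -- transfinite recursion
  let f : ι → ℝ := fun i =>
    (inferInstance : WellFoundedLT ι).wf.fix
      (fun i IH => Classical.choose (key i IH)) i
  have hfdef : ∀ i : ι, f i = Classical.choose (key i (fun j _ => f j)) := by
    intro i
    exact WellFounded.fix_eq _ _ i
  have hspec : ∀ i : ι, f i ∈ (p i).1 ∧ ∀ (j : ι), j < i → Irrational (f i - f j) := by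
    intro i
    rw [hfdef i]
    exact Classical.choose_spec (key i (fun j _ => f j))
  refine ⟨Set.range f, ?_, ?_⟩
  · rintro x ⟨i, rfl⟩ y ⟨j, rfl⟩ hxy
    rcases lt_trichotomy i j with h | h | h
    · have := (hspec j).2 i h
      rcases abs_cases (f i - f j) with ⟨he, -⟩ | ⟨he, -⟩
      · rw [he]; rwa [← neg_sub, irrational_neg_iff] at this
      · rw [he, neg_sub]; exact this
    · exact absurd (congrArg f h) hxy
    · have := (hspec i).2 j h
      rcases abs_cases (f i - f j) with ⟨he, -⟩ | ⟨he, -⟩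
      · rw [he]; exact this
      · rw [he, neg_sub]; rwa [← neg_sub, irrational_neg_iff] at this
  · intro P hP hne
    obtain ⟨i, hi⟩ := hsurj2 ⟨P, hP, hne⟩
    refine ⟨f i, ⟨i, rfl⟩, ?_⟩
    have := (hspec i).1
    rwa [hi] at this
end

section
/- Any set F ⊆ ℝ that meets every nonempty perfect set and is an ARD set is not Lebesgue measurable and does not have the Baire property. -/
open Set Topology Filter MeasureTheory Pointwise

instance : Uncountable (ℕ → Bool) := by
  rw [← not_countable_iff, ← Cardinal.mk_le_aleph0_iff]
  simp only [Cardinal.mk_pi, Cardinal.mk_fintype, Fintype.card_bool, Nat.cast_ofNat,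
    Cardinal.prod_const, Cardinal.lift_id, Cardinal.mk_eq_aleph0, Cardinal.two_power_aleph0]
  exact Cardinal.aleph0_lt_continuum.not_ge

theorem Function.Injective.not_countable_range {ι α : Type*} [Uncountable ι] {f : ι → α}
    (hf : Function.Injective f) : ¬(range f).Countable := fun h =>
  not_countable_univ ((mapsTo_range f univ).countable_of_injOn hf.injOn h)

theorem MeasurableSet.exists_perfect_nonempty_subset_of_not_countable {α : Type*}
    [TopologicalSpace α] [PolishSpace α] [MeasurableSpace α] [BorelSpace α] {s : Set α}
    (hs : MeasurableSet s) (hunc : ¬s.Countable) :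
    ∃ P : Set α, Perfect P ∧ P.Nonempty ∧ P ⊆ s := by
  -- `s` is closed in a finer Polish topology, which yields a Cantor set inside `s`.
  obtain ⟨f, hfs, hfc, hfinj⟩ :
      ∃ f : (ℕ → Bool) → α, range f ⊆ s ∧ Continuous f ∧ Function.Injective f := by
    obtain ⟨t, hle, hpolish, hclosed, -⟩ := hs.isClopenable
    obtain ⟨f, hfs, hfc, hfinj⟩ :=
      @IsClosed.exists_nat_bool_injection_of_not_countable α t hpolish s hclosed hunc
    exact ⟨f, hfs, continuous_le_rng hle hfc, hfinj⟩
  obtain ⟨P, hP, hPne, hPf⟩ := exists_perfect_nonempty_of_isClosed_of_not_countable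
    (isCompact_range hfc).isClosed hfinj.not_countable_range
  exact ⟨P, hP, hPne, hPf.trans hfs⟩

theorem Set.Countable.isMeagre {X : Type*} [TopologicalSpace X] [T1Space X]
    [∀ x : X, (𝓝[≠] x).NeBot] {s : Set X} (hs : s.Countable) : IsMeagre s := by
  rw [← biUnion_of_singleton s]
  exact isMeagre_biUnion hs fun x _ =>
    (isClosed_singleton.isNowhereDense_iff.2 (interior_singleton x)).isMeagre

-- Pettis' theorem, the Baire category analogue of Steinhaus' theorem.
theorem BaireMeasurableSet.sub_mem_nhds_zero {G : Type*} [TopologicalSpace G] [AddGroup G]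
    [IsTopologicalAddGroup G] [BaireSpace G] {s : Set G} (hs : BaireMeasurableSet s)
    (hns : ¬IsMeagre s) : s - s ∈ 𝓝 0 := by
  obtain ⟨u, hu, hsu⟩ := hs.residualEq_isOpen
  have hE : {x | x ∈ s ↔ x ∈ u} ∈ residual G := eventuallyEq_set.1 hsu
  obtain ⟨x₀, hx₀⟩ : u.Nonempty := by
    refine nonempty_iff_ne_empty.2 fun hu₀ => hns ?_
    filter_upwards [hE] with x hx
    simpa [hu₀] using hx
  have hN : {t : G | t + x₀ ∈ u} ∈ 𝓝 0 :=
    (hu.preimage (continuous_add_const x₀)).mem_nhds (by simpa using hx₀)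
  filter_upwards [hN] with t ht
  have hE' : (t + ·) ⁻¹' {x | x ∈ s ↔ x ∈ u} ∈ residual G := by
    rw [← (Homeomorph.addLeft t).residual_map_eq] at hE
    exact hE
  obtain ⟨x, ⟨hxu, htxu⟩, hxE, htxE⟩ :=
    (dense_of_mem_residual (inter_mem hE hE')).inter_open_nonempty (u ∩ (t + ·) ⁻¹' u)
      (hu.inter (hu.preimage (continuous_const_add t))) ⟨x₀, hx₀, ht⟩
  exact ⟨t + x, htxE.2 htxu, x, hxE.2 hxu, add_sub_cancel_right t x⟩

theorem ARD.sub_notMem_nhds_zero {F : Set ℝ} (hF : ARD F) : F - F ∉ 𝓝 0 := by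
  intro h
  obtain ⟨ε, hε, hball⟩ := Metric.mem_nhds_iff.1 h
  obtain ⟨q, hq, hqε⟩ := exists_rat_btwn hε
  have hqF : (q : ℝ) ∈ F - F :=
    hball (by rwa [mem_ball_zero_iff, Real.norm_eq_abs, abs_of_pos hq])
  obtain ⟨x, hx, y, hy, hxy : x - y = q⟩ := hqF
  have hne : x ≠ y := by
    rintro rfl
    rw [sub_self] at hxy
    exact hq.ne hxy
  have := hF x hx y hy hne
  rw [hxy, abs_of_pos hq] at this
  exact Rat.not_irrational q this

def MeetsPerfectSets {α : Type*} [TopologicalSpace α] (F : Set α) : Prop :=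
  ∀ P : Set α, Perfect P → P.Nonempty → (F ∩ P).Nonempty

namespace MeetsPerfectSets

variable {α : Type*} [TopologicalSpace α] [PolishSpace α] [MeasurableSpace α] [BorelSpace α]
  {F : Set α}

theorem countable_of_disjoint (hF : MeetsPerfectSets F) {s : Set α} (hs : MeasurableSet s)
    (hsF : Disjoint s F) : s.Countable := by
  by_contra hunc
  obtain ⟨P, hP, hPne, hPs⟩ := hs.exists_perfect_nonempty_subset_of_not_countable hunc
  obtain ⟨x, hxF, hxP⟩ := hF P hP hPne
  exact disjoint_left.1 hsF (hPs hxP) hxF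

theorem measure_ne_zero (hF : MeetsPerfectSets F) (μ : Measure α) [NullSingletonClass μ]
    (hμ : μ ≠ 0) : μ F ≠ 0 := by
  intro hF₀
  set T := toMeasurable μ F
  have hTc : Tᶜ.Countable :=
    hF.countable_of_disjoint (measurableSet_toMeasurable μ F).compl
      (disjoint_compl_left.mono_right (subset_toMeasurable μ F))
  refine Measure.measure_univ_ne_zero.2 hμ ?_
  rw [← measure_add_measure_compl (measurableSet_toMeasurable μ F), measure_toMeasurable, hF₀,
    hTc.measure_zero μ, add_zero]

theorem not_isMeagre [Nonempty α] [∀ x : α, (𝓝[≠] x).NeBot] (hF : MeetsPerfectSets F) :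
    ¬IsMeagre F := by
  intro hmeagre
  obtain ⟨G, hGF, hG, hGd⟩ := mem_residual.1 hmeagre
  have hGc : G.Countable :=
    hF.countable_of_disjoint hG.measurableSet (subset_compl_iff_disjoint_right.1 hGF)
  exact not_isMeagre_of_isGδ_of_dense hG hGd hGc.isMeagre

end MeetsPerfectSets

theorem stmt11 (F : Set ℝ)
    (hmeet : ∀ P : Set ℝ, Perfect P → P.Nonempty → (F ∩ P).Nonempty)
    (hARD : ARD F) :
    ¬ MeasurableSet F ∧ ¬ BaireMeasurableSet F := by
  have hF : MeetsPerfectSets F := hmeet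
  refine ⟨fun hFm => hARD.sub_notMem_nhds_zero ?_, fun hFb => hARD.sub_notMem_nhds_zero ?_⟩
  · exact Measure.sub_mem_nhds_zero_of_addHaar_pos volume F hFm
      (pos_iff_ne_zero.2 (hF.measure_ne_zero volume (NeZero.ne volume)))
  · exact hFb.sub_mem_nhds_zero hF.not_isMeagre
end

section
/- Let E ⊆ ℝ² be Lebesgue measurable with positive measure, and assume non(𝒩) = cof(𝒩) = κ where 𝒩 is the ideal of Lebesgue null sets. Then there is a partial injection f : ℝ ⇀ ℝ whose graph is contained in E, is an ARD subset of ℝ² (all pairwise Euclidean distances between distinct graph points are irrational), and is full in E (every measurable set meeting E in positive outer measure meets graph(f) in positive outer measure). -/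
/-!
There are only `𝔠` Borel subsets of `E` of positive measure. Enumerate them in order type `𝔠`
and choose, by transfinite recursion, one point in each, so that at every stage fewer than `𝔠`
points have been chosen. A Borel set `K` of positive measure has `𝔠` abscissae `a` whose vertical
section has positive measure, hence `𝔠` points; an earlier point `p` and a rational `q` exclude at
most two ordinates `b` with `dist((a, b), p) = q`. So `K` contains a point that shares no coordinate
with, and lies at irrational distance from, every earlier point. The resulting set meets every
Borel subset of `E` of positive measure, so it cannot be null in any `M` for which `M ∩ E` is not.
-/

open MeasureTheory

/-- Euclidean distance on ℝ × ℝ. -/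
noncomputable def eudist (p q : ℝ × ℝ) : ℝ :=
  Real.sqrt ((p.1 - q.1) ^ 2 + (p.2 - q.2) ^ 2)

/-- ARD subset of the plane: Euclidean distances between distinct points are irrational. -/
def ARD2 (G : Set (ℝ × ℝ)) : Prop := ∀ p ∈ G, ∀ q ∈ G, p ≠ q → Irrational (eudist p q)

/-- non(𝒩): least cardinality of a non-null set of reals. -/
noncomputable def nonNull : Cardinal :=
  sInf {c : Cardinal | ∃ S : Set ℝ, Cardinal.mk S = c ∧ volume S ≠ 0}

/-- cof(𝒩): least cardinality of a cofinal family of null sets. -/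
noncomputable def cofNull : Cardinal :=
  sInf {c : Cardinal | ∃ B : Set (Set ℝ), Cardinal.mk B = c ∧
    (∀ b ∈ B, volume b = 0) ∧ ∀ N : Set ℝ, volume N = 0 → ∃ b ∈ B, N ⊆ b}

open Cardinal Set

universe u

section Transversal

variable {ι α : Type u}

theorem exists_transversal_of_forall_mk_Iio_lt [LinearOrder ι] [WellFoundedLT ι]
    {κ : Cardinal} (hι : ∀ i : ι, #(Iio i) < κ) (K : ι → Set α) (R : α → α → Prop)
    (hK : ∀ i, ∀ P : Set α, #P < κ → ∃ z ∈ K i, ∀ p ∈ P, R z p) :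
    ∃ g : ι → α, ∀ i, g i ∈ K i ∧ ∀ j < i, R (g i) (g j) := by
  have step (i : ι) (g : ∀ j < i, α) : ∃ z ∈ K i, ∀ p ∈ range fun j : Iio i ↦ g j j.2, R z p :=
    hK i _ (mk_range_le.trans_lt (hι i))
  let g : ι → α := wellFounded_lt.fix fun i g ↦ (step i g).choose
  refine ⟨g, fun i ↦ ?_⟩
  have hg : g i = (step i fun j _ ↦ g j).choose := wellFounded_lt.fix_eq _ i
  obtain ⟨hmem, hR⟩ := (step i fun j _ ↦ g j).choose_spec
  rw [hg]
  exact ⟨hmem, fun j hj ↦ hR _ ⟨⟨j, hj⟩, rfl⟩⟩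

theorem exists_pairwise_forall_inter_nonempty (𝒞 : Set (Set α)) {R : α → α → Prop}
    (hR : ∀ x y, R x y → R y x) (h𝒞 : ∀ K ∈ 𝒞, ∀ P : Set α, #P < #𝒞 → ∃ z ∈ K, ∀ p ∈ P, R z p) :
    ∃ G ⊆ ⋃₀ 𝒞, (∀ K ∈ 𝒞, (K ∩ G).Nonempty) ∧ G.Pairwise R := by
  obtain ⟨e⟩ : Nonempty ((#𝒞).ord.ToType ≃ 𝒞) := Cardinal.eq.1 (by simp)
  obtain ⟨g, hg⟩ := exists_transversal_of_forall_mk_Iio_lt (fun i ↦ by simpa using mk_Iio_lt i)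
    (fun i ↦ (e i : Set α)) R fun i ↦ h𝒞 _ (e i).2
  refine ⟨range g, ?_, fun K hK ↦ ?_, ?_⟩
  · rintro _ ⟨i, rfl⟩
    exact ⟨e i, (e i).2, (hg i).1⟩
  · obtain ⟨i, hi⟩ := e.surjective ⟨K, hK⟩
    exact ⟨g i, by simpa [hi] using (hg i).1, i, rfl⟩
  · rintro _ ⟨i, rfl⟩ _ ⟨j, rfl⟩ hne
    rcases lt_trichotomy i j with hij | rfl | hij
    · exact hR _ _ ((hg j).2 i hij)
    · exact absurd rfl hne
    · exact (hg i).2 j hij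

end Transversal

theorem MeasurableSet.continuum_le_mk {α : Type u} [MeasurableSpace α] [StandardBorelSpace α]
    {A : Set α} (hA : MeasurableSet A) (hAc : ¬A.Countable) : 𝔠 ≤ #A := by
  have := hA.standardBorel
  have : ¬Countable A := by rwa [countable_coe_iff]
  simpa using (mk_congr_lift (PolishSpace.measurableEquivNatBoolOfNotCountable this).toEquiv).ge

theorem continuum_le_mk_of_measure_ne_zero {α : Type u} [MeasurableSpace α]
    [StandardBorelSpace α] {μ : Measure α} [NullSingletonClass μ] {A : Set α}
    (hA : MeasurableSet A) (hμA : μ A ≠ 0) : 𝔠 ≤ #A :=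
  hA.continuum_le_mk fun hc ↦ hμA (hc.measure_zero μ)

theorem mk_measurableSet_le_continuum {α : Type u} [TopologicalSpace α]
    [SecondCountableTopology α] [MeasurableSpace α] [BorelSpace α] :
    #{s : Set α | MeasurableSet s} ≤ 𝔠 := by
  obtain ⟨b, hbc, -, hb⟩ := TopologicalSpace.exists_countable_basis α
  rw [BorelSpace.measurable_eq (α := α), borel_eq_generateFrom_of_subbasis hb.eq_generateFrom]
  exact MeasurableSpace.cardinal_measurableSet_le_continuum
    (hbc.le_aleph0.trans aleph0_le_continuum)

theorem exists_mem_notMem_of_mk_lt {α : Type u} {c : Cardinal} {A B : Set α} (hA : c ≤ #A)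
    (hB : #B < c) : ∃ a ∈ A, a ∉ B :=
  not_subset.1 fun h ↦ (hA.trans (mk_le_mk_of_subset h)).not_gt hB

theorem measure_setOf_measure_prodMk_ne_zero {α β : Type*} [MeasurableSpace α]
    [MeasurableSpace β] {μ : Measure α} {ν : Measure β} [SFinite ν] {s : Set (α × β)}
    (hs : MeasurableSet s) (h : μ.prod ν s ≠ 0) : μ {x | ν (Prod.mk x ⁻¹' s) ≠ 0} ≠ 0 := by
  contrapose! h
  rw [Measure.measure_prod_null hs]
  exact ae_iff.2 (by simpa using h)

theorem eudist_comm (p q : ℝ × ℝ) : eudist p q = eudist q p := by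
  unfold eudist
  ring_nf

def IrrationallyApart (z p : ℝ × ℝ) : Prop :=
  z.1 ≠ p.1 ∧ z.2 ≠ p.2 ∧ Irrational (eudist z p)

theorem IrrationallyApart.symm {z p : ℝ × ℝ} (h : IrrationallyApart z p) :
    IrrationallyApart p z :=
  ⟨h.1.symm, h.2.1.symm, eudist_comm z p ▸ h.2.2⟩

theorem exists_int_eq_add_mul_sqrt_of_eudist_eq {z p : ℝ × ℝ} {q : ℚ} (h : eudist z p = q) :
    ∃ s : ℤ, z.2 = p.2 + s * √(q ^ 2 - (z.1 - p.1) ^ 2) := by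
  have hq : (q : ℝ) ^ 2 - (z.1 - p.1) ^ 2 = (z.2 - p.2) ^ 2 := by
    rw [← h, eudist, Real.sq_sqrt (by positivity)]
    ring
  rw [hq, Real.sqrt_sq_eq_abs]
  rcases abs_choice (z.2 - p.2) with h' | h'
  · exact ⟨1, by rw [h']; ring⟩
  · exact ⟨-1, by rw [h']; push_cast; ring⟩

theorem mk_prod_rat_int_lt_continuum {P : Set (ℝ × ℝ)} (hP : #P < 𝔠) : #(P × ℚ × ℤ) < 𝔠 := by
  have hcount : #(ℚ × ℤ) < 𝔠 := mk_le_aleph0.trans_lt aleph0_lt_continuum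
  simpa using mul_lt_of_lt aleph0_le_continuum hP hcount

theorem exists_mem_forall_irrationallyApart {K : Set (ℝ × ℝ)} (hK : MeasurableSet K)
    (hK0 : volume K ≠ 0) {P : Set (ℝ × ℝ)} (hP : #P < 𝔠) :
    ∃ z ∈ K, ∀ p ∈ P, IrrationallyApart z p := by
  rw [Measure.volume_eq_prod] at hK0
  have hsec : MeasurableSet {x : ℝ | volume (Prod.mk x ⁻¹' K) ≠ 0} :=
    measurable_measure_prodMk_left hK (measurableSet_singleton 0).compl
  obtain ⟨a, ha, haP⟩ := exists_mem_notMem_of_mk_lt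
    (continuum_le_mk_of_measure_ne_zero hsec
      (measure_setOf_measure_prodMk_ne_zero hK hK0))
    (mk_image_le.trans_lt hP : #(Prod.fst '' P) < 𝔠)
  -- `s = 0` excludes the ordinate of `p`, `s = ±1` those at rational distance `q` from `p`
  obtain ⟨b, hb, hbP⟩ := exists_mem_notMem_of_mk_lt
    (continuum_le_mk_of_measure_ne_zero (measurable_prodMk_left hK) ha)
    (mk_range_le.trans_lt (mk_prod_rat_int_lt_continuum hP) :
      #(range fun x : P × ℚ × ℤ ↦ x.1.1.2 + x.2.2 * √(x.2.1 ^ 2 - (a - x.1.1.1) ^ 2)) < 𝔠)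
  refine ⟨(a, b), hb, fun p hp ↦ ⟨fun h ↦ haP ⟨p, hp, h.symm⟩, fun h ↦ hbP ⟨(⟨p, hp⟩, 0, 0), ?_⟩,
    fun ⟨q, hq⟩ ↦ ?_⟩⟩
  · simpa using h.symm
  · obtain ⟨s, hs⟩ := exists_int_eq_add_mul_sqrt_of_eudist_eq hq.symm
    exact hbP ⟨(⟨p, hp⟩, q, s), hs.symm⟩

theorem measure_inter_pos_of_forall_inter_nonempty {α : Type*} [MeasurableSpace α]
    {μ : Measure α} {E G M : Set α} (hE : MeasurableSet E)
    (hG : ∀ K, MeasurableSet K → K ⊆ E → μ K ≠ 0 → (K ∩ G).Nonempty)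
    (hM : MeasurableSet M) (hME : 0 < μ (M ∩ E)) : 0 < μ (M ∩ G) := by
  refine pos_iff_ne_zero.2 fun hMG ↦ ?_
  set T := toMeasurable μ (M ∩ G)
  have hK : μ ((M ∩ E) \ T) ≠ 0 := by
    rwa [measure_sdiff_null (by rwa [measure_toMeasurable]), ← pos_iff_ne_zero]
  obtain ⟨z, ⟨⟨hzM, -⟩, hzT⟩, hzG⟩ :=
    hG _ ((hM.inter hE).diff (measurableSet_toMeasurable _ _))
      (sdiff_subset.trans inter_subset_right) hK
  exact hzT (subset_toMeasurable _ _ ⟨hzM, hzG⟩)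

theorem stmt14_general
    (E : Set (ℝ × ℝ)) (hE : MeasurableSet E) :
    ∃ G : Set (ℝ × ℝ), G ⊆ E ∧
      (∀ p ∈ G, ∀ q ∈ G, p.1 = q.1 → p = q) ∧
      (∀ p ∈ G, ∀ q ∈ G, p.2 = q.2 → p = q) ∧
      ARD2 G ∧
      ∀ M : Set (ℝ × ℝ), MeasurableSet M → 0 < volume (M ∩ E) → 0 < volume (M ∩ G) := by
  set 𝒞 : Set (Set (ℝ × ℝ)) := {K | MeasurableSet K ∧ K ⊆ E ∧ volume K ≠ 0}
  have h𝒞 : #𝒞 ≤ 𝔠 := (mk_le_mk_of_subset fun _ hK ↦ hK.1).trans mk_measurableSet_le_continuum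
  obtain ⟨G, hGE, hmeet, hG⟩ := exists_pairwise_forall_inter_nonempty 𝒞
    (fun _ _ h ↦ h.symm) fun K hK P hP ↦
      exists_mem_forall_irrationallyApart hK.1 hK.2.2 (hP.trans_le h𝒞)
  refine ⟨G, hGE.trans (sUnion_subset fun K hK ↦ hK.2.1),
    fun p hp q hq h ↦ by_contra fun hne ↦ (hG hp hq hne).1 h,
    fun p hp q hq h ↦ by_contra fun hne ↦ (hG hp hq hne).2.1 h,
    fun p hp q hq hne ↦ (hG hp hq hne).2.2, fun M hM ↦ ?_⟩
  exact measure_inter_pos_of_forall_inter_nonempty hE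
    (fun K hK hKE hK0 ↦ hmeet K ⟨hK, hKE, hK0⟩) hM

theorem stmt14 (hcard : nonNull = cofNull)
    (E : Set (ℝ × ℝ)) (hE : MeasurableSet E) (hpos : 0 < volume E) :
    ∃ G : Set (ℝ × ℝ), G ⊆ E ∧
      (∀ p ∈ G, ∀ q ∈ G, p.1 = q.1 → p = q) ∧
      (∀ p ∈ G, ∀ q ∈ G, p.2 = q.2 → p = q) ∧
      ARD2 G ∧
      ∀ M : Set (ℝ × ℝ), MeasurableSet M → 0 < volume (M ∩ E) → 0 < volume (M ∩ G) :=
  stmt14_general E hE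
end
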